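/- arXiv:2104.03580 — 3 statements merged into one kernel-verified Lean document; each statement's English description precedes it below -/
import Mathlib

section
/- Let T, T̂ ⊆ {1,…,N} with T ⊆ T̂ (so T̂^c ⊆ T^c), let 0 ≤ ω ≤ 1, and let e, h ∈ ℝ^N satisfy ω‖e_{T̂} + h_{T̂}‖₁ + ‖e_{T̂^c} + h_{T̂^c}‖₁ ≤ ω‖e_{T̂}‖₁ + ‖e_{T̂^c}‖₁. Then ω‖h_{T^c}‖₁ + (1−ω)‖h_{T̂^c}‖₁ ≤ ω‖h_T‖₁ + 2(ω‖e_{T^c}‖₁ + (1−ω)‖e_{T̂^c}‖₁). -/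
/-!
Split `T̂ = T ∪ (T̂ \ T)` and `Tᶜ = (T̂ \ T) ∪ T̂ᶜ`. The reverse triangle inequality on each piece bounds the
left-hand side of the hypothesis from below by
`ω (‖e_T‖₁ - ‖h_T‖₁ + ‖h_{T̂∖T}‖₁ - ‖e_{T̂∖T}‖₁) + ‖h_{T̂ᶜ}‖₁ - ‖e_{T̂ᶜ}‖₁`,
and after cancelling `ω‖e_T‖₁` what remains is exactly the claim, because
`ω‖h_{Tᶜ}‖₁ + (1 - ω)‖h_{T̂ᶜ}‖₁ = ω‖h_{T̂∖T}‖₁ + ‖h_{T̂ᶜ}‖₁` and likewise for `e`.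
-/

/-- ℓ₁ norm on `ℝ^N`. -/
noncomputable def l1 {N : ℕ} (x : Fin N → ℝ) : ℝ := ∑ i, |x i|

/-- ℓ₂ (Euclidean) norm on `ℝ^N`. -/
noncomputable def l2 {N : ℕ} (x : Fin N → ℝ) : ℝ := Real.sqrt (∑ i, (x i) ^ 2)

/-- Restriction of a vector to an index set (zero outside the set). -/
def restr {N : ℕ} (S : Finset (Fin N)) (x : Fin N → ℝ) : Fin N → ℝ :=
  fun i => if i ∈ S then x i else 0

section

variable {N : ℕ}

theorem restr_add (S : Finset (Fin N)) (x y : Fin N → ℝ) :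
    restr S (x + y) = restr S x + restr S y := by
  funext i
  by_cases hi : i ∈ S <;> simp [restr, hi]

theorem l1_sub_l1_le_l1_add (x y : Fin N → ℝ) : l1 x - l1 y ≤ l1 (x + y) := by
  unfold l1
  rw [← Finset.sum_sub_distrib]
  refine Finset.sum_le_sum fun i _ => ?_
  simpa using abs_sub_abs_le_abs_sub (x i) (-y i)

theorem l1_restr_sub_le (S : Finset (Fin N)) (x y : Fin N → ℝ) :
    l1 (restr S x) - l1 (restr S y) ≤ l1 (restr S (x + y)) := by
  rw [restr_add]
  exact l1_sub_l1_le_l1_add _ _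

theorem l1_restr_eq_add_sdiff {S U : Finset (Fin N)} (hSU : S ⊆ U) (x : Fin N → ℝ) :
    l1 (restr U x) = l1 (restr S x) + l1 (restr (U \ S) x) := by
  unfold l1
  rw [← Finset.sum_add_distrib]
  refine Finset.sum_congr rfl fun i _ => ?_
  by_cases hS : i ∈ S
  · simp [restr, hS, hSU hS]
  · by_cases hU : i ∈ U <;> simp [restr, hS, hU]

end

theorem stmt11_general (N : ℕ) (T That : Finset (Fin N)) (hTT : T ⊆ That)
    (ω : ℝ) (hω0 : 0 ≤ ω) (e h : Fin N → ℝ)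
    (hyp : ω * l1 (restr That e + restr That h) + l1 (restr Thatᶜ e + restr Thatᶜ h) ≤
      ω * l1 (restr That e) + l1 (restr Thatᶜ e)) :
    ω * l1 (restr Tᶜ h) + (1 - ω) * l1 (restr Thatᶜ h) ≤
      ω * l1 (restr T h) +
        2 * (ω * l1 (restr Tᶜ e) + (1 - ω) * l1 (restr Thatᶜ e)) := by
  set D := That \ T
  have split_That (x : Fin N → ℝ) : l1 (restr That x) = l1 (restr T x) + l1 (restr D x) :=
    l1_restr_eq_add_sdiff hTT x
  have split_Tc (x : Fin N → ℝ) : l1 (restr Tᶜ x) = l1 (restr Thatᶜ x) + l1 (restr D x) := by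
    rw [l1_restr_eq_add_sdiff (Finset.compl_subset_compl.mpr hTT), compl_sdiff_compl]
  rw [← restr_add, ← restr_add, split_That, split_That] at hyp
  have bound_T := l1_restr_sub_le T e h
  have bound_D := l1_restr_sub_le D h e
  have bound_Thatc := l1_restr_sub_le Thatᶜ h e
  rw [add_comm h e] at bound_D bound_Thatc
  have bound_That := mul_le_mul_of_nonneg_left (add_le_add bound_T bound_D) hω0
  rw [split_Tc, split_Tc]
  linarith

/-- If `T ⊆ T̂`, `0 ≤ ω ≤ 1`, and
`ω‖e_{T̂} + h_{T̂}‖₁ + ‖e_{T̂ᶜ} + h_{T̂ᶜ}‖₁ ≤ ω‖e_{T̂}‖₁ + ‖e_{T̂ᶜ}‖₁`, then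
`ω‖h_{Tᶜ}‖₁ + (1−ω)‖h_{T̂ᶜ}‖₁ ≤ ω‖h_T‖₁ + 2(ω‖e_{Tᶜ}‖₁ + (1−ω)‖e_{T̂ᶜ}‖₁)`. -/
theorem stmt11 (N : ℕ) (T That : Finset (Fin N)) (hTT : T ⊆ That)
    (ω : ℝ) (hω0 : 0 ≤ ω) (hω1 : ω ≤ 1) (e h : Fin N → ℝ)
    (hyp : ω * l1 (restr That e + restr That h) + l1 (restr Thatᶜ e + restr Thatᶜ h) ≤
      ω * l1 (restr That e) + l1 (restr Thatᶜ e)) :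
    ω * l1 (restr Tᶜ h) + (1 - ω) * l1 (restr Thatᶜ h) ≤
      ω * l1 (restr T h) +
        2 * (ω * l1 (restr Tᶜ e) + (1 - ω) * l1 (restr Thatᶜ e)) :=
  stmt11_general N T That hTT ω hω0 e h hyp
end

section
/- (Weighted ℓ₁ recovery error bound.) Let the measurement model be y = Hx* + e with H ∈ ℝ^{N×n} full column rank, N = Tm, smallest singular value σ̲ > 0, and singular value decomposition H = U [Σ₁; 0] Vᵀ with U = [U₁ U₂]. Suppose U₂ᵀ satisfies the RIP: (1−δ_s)‖v‖₂² ≤ ‖U₂ᵀ v‖₂² ≤ (1+δ_s)‖v‖₂² for all s-sparse v, for s ∈ {a·km, (a+1)·km}. Let T = supp-estimate set with |T̂_η| = ρ·km containing the true attack support T of size km (perfect pruned prior), let x̂ solve min_z ‖y − Hz‖_{1,w} with weights w_j = ω on T̂_η and w_j = 1 on T̂_η^c, 0 ≤ ω ≤ 1. If a ≥ max{ρ−1, 1} is an integer and δ_{a·km} + C·δ_{(a+1)·km} < C − 1 with C = a / (ω + (1−ω)√(ρ−1))², then ‖x̂ − x*‖₂ ≤ (C₁/(σ̲√(km))) ·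 (ω·σ_{km}(e) + (1−ω)‖e_{T̂_η^c}‖₁), where C₁ = 2a^{-1/2}(√(1−δ_{(a+1)km}) + √(1+δ_{akm})) / (√(1−δ_{(a+1)km}) − (1/C)·√(1+δ_{akm})) and σ_{km}(e) = ‖e_{T^c}‖₁ is the best km-sparse approximation error of e. -/
open scoped Classical in
/-- Number of nonzero entries (the "ℓ₀ norm") of a vector. -/
noncomputable def supp0 {N : ℕ} (v : Fin N → ℝ) : ℕ :=
  (Finset.univ.filter fun i => v i ≠ 0).card


/-! Since the attack `e` is supported on `T ⊆ T̂`, the right-hand side vanishes and the claim is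
exact recovery. Optimality of `x̂` against the feasible point `x*` puts `f = H (x̂ - x*)` in the
weighted cone `‖f_{Tᶜ}‖₁ ≤ ω ‖f_T‖₁ + (1 - ω) ‖f_{T̂ \ T}‖₁`, and `U₂ᵀ f = 0`. Let `T₁` collect the
`s = a·km` largest entries of `f` off `T`. Cutting the rest of `Tᶜ` into blocks of `s` entries of
decreasing modulus, the upper RIP of order `s` and the lower RIP of order `s + km` give
`(1 - δ₂) ‖f_{T ∪ T₁}‖₂² ≤ (1 + δ₁) ‖f_{Tᶜ}‖₁² / s`, while Cauchy–Schwarz turns the cone into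
`‖f_{Tᶜ}‖₁ ≤ √(km) (ω + (1 - ω) √(ρ - 1)) ‖f_{T ∪ T₁}‖₂`. The condition `δ₁ + C δ₂ < C - 1` makes
the two bounds incompatible unless `f = 0`, and then `σ̲ > 0` forces `x̂ = x*`. -/

open Finset
open scoped Matrix

section TopSubset

variable {ι : Type*} [DecidableEq ι]

def IsTopSubset (v : ι → ℝ) (S T₁ : Finset ι) : Prop :=
  T₁ ⊆ S ∧ ∀ i ∈ T₁, ∀ j ∈ S \ T₁, |v j| ≤ |v i|

theorem exists_isTopSubset (v : ι → ℝ) (S : Finset ι) {r : ℕ} (hr : r ≤ #S) :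
    ∃ T₁, IsTopSubset v S T₁ ∧ #T₁ = r := by
  induction r with
  | zero => exact ⟨∅, ⟨empty_subset S, by simp⟩, card_empty⟩
  | succ r ih =>
    obtain ⟨T₁, ⟨hsub, htop⟩, hcard⟩ := ih (by omega)
    have hne : (S \ T₁).Nonempty := by
      rw [← card_pos, card_sdiff_of_subset hsub]; omega
    obtain ⟨j, hj, hjmax⟩ := exists_max_image (S \ T₁) (fun i => |v i|) hne
    obtain ⟨hjS, hjT⟩ := mem_sdiff.1 hj
    refine ⟨insert j T₁, ⟨insert_subset hjS hsub, ?_⟩, by rw [card_insert_of_notMem hjT, hcard]⟩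
    intro i hi k hk
    have hk' : k ∈ S \ T₁ := by grind
    rcases mem_insert.1 hi with rfl | hi
    · exact hjmax k hk'
    · exact htop i hi k hk'

namespace IsTopSubset

variable {v : ι → ℝ} {S T₁ : Finset ι}

theorem card_mul_abs_le (h : IsTopSubset v S T₁) {j : ι} (hj : j ∈ S \ T₁) :
    #T₁ * |v j| ≤ ∑ i ∈ T₁, |v i| := by
  rw [← nsmul_eq_mul]
  exact card_nsmul_le_sum _ _ _ fun i hi => h.2 i hi j hj

theorem sum_sq_le (h : IsTopSubset v S T₁) {R : Finset ι} (hR : R ⊆ S) (hcard : #R ≤ #T₁) :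
    ∑ i ∈ R, v i ^ 2 ≤ ∑ i ∈ T₁, v i ^ 2 := by
  have hcard' : #(R \ T₁) ≤ #(T₁ \ R) := by
    have := card_inter_add_card_sdiff R T₁
    have := card_inter_add_card_sdiff T₁ R
    rw [inter_comm] at this
    omega
  have hout : ∑ i ∈ R \ T₁, v i ^ 2 ≤ ∑ i ∈ T₁ \ R, v i ^ 2 := by
    rcases (T₁ \ R).eq_empty_or_nonempty with h0 | hne
    · rw [h0, card_empty, Nat.le_zero, card_eq_zero] at hcard'
      simp [h0, hcard']
    obtain ⟨j, hj, hjmin⟩ := exists_min_image (T₁ \ R) (fun i => v i ^ 2) hne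
    calc ∑ i ∈ R \ T₁, v i ^ 2
        ≤ #(R \ T₁) • v j ^ 2 := sum_le_card_nsmul _ _ _ fun i hi =>
          sq_le_sq.2 (h.2 j (mem_sdiff.1 hj).1 i (by grind))
      _ ≤ #(T₁ \ R) • v j ^ 2 := nsmul_le_nsmul_left (sq_nonneg _) hcard'
      _ ≤ ∑ i ∈ T₁ \ R, v i ^ 2 := card_nsmul_le_sum _ _ _ hjmin
  rw [← sum_inter_add_sum_sdiff R T₁, ← sum_inter_add_sum_sdiff T₁ R, inter_comm]
  linarith

end IsTopSubset

end TopSubset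

section Vectors

variable {N : ℕ}

theorem l2_eq_norm (x : Fin N → ℝ) :
    l2 x = ‖(WithLp.toLp 2 x : EuclideanSpace ℝ (Fin N))‖ := by
  simp [l2, EuclideanSpace.norm_eq]

theorem l2_nonneg (x : Fin N → ℝ) : 0 ≤ l2 x := Real.sqrt_nonneg _

theorem l2_add_le (x y : Fin N → ℝ) : l2 (x + y) ≤ l2 x + l2 y := by
  simpa only [l2_eq_norm, WithLp.toLp_add] using norm_add_le _ _

theorem l2_neg (x : Fin N → ℝ) : l2 (-x) = l2 x := by
  simp only [l2_eq_norm, WithLp.toLp_neg, norm_neg]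

theorem l2_zero : l2 (0 : Fin N → ℝ) = 0 := by simp [l2]

theorem restr_empty (x : Fin N → ℝ) : restr ∅ x = 0 := by
  ext i; simp [restr]

theorem restr_add_restr_sdiff {S T : Finset (Fin N)} (h : T ⊆ S) (x : Fin N → ℝ) :
    restr T x + restr (S \ T) x = restr S x := by
  ext i
  by_cases hi : i ∈ T
  · simp [restr, hi, h hi]
  · simp [restr, hi]

theorem restr_add_restr_compl (S : Finset (Fin N)) (x : Fin N → ℝ) :
    restr S x + restr Sᶜ x = x := by
  ext i; by_cases hi : i ∈ S <;> simp [restr, hi]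

theorem supp0_restr_le (S : Finset (Fin N)) (x : Fin N → ℝ) : supp0 (restr S x) ≤ #S := by
  unfold supp0
  exact card_le_card fun i hi => by by_contra h; simp [restr, h] at hi

theorem l1_restr (S : Finset (Fin N)) (x : Fin N → ℝ) : l1 (restr S x) = ∑ i ∈ S, |x i| := by
  simp [l1, restr, apply_ite, sum_ite_mem]

theorem l2_restr (S : Finset (Fin N)) (x : Fin N → ℝ) :
    l2 (restr S x) = √(∑ i ∈ S, x i ^ 2) := by
  simp [l2, restr, sum_ite_mem]

theorem l2_sq_restr (S : Finset (Fin N)) (x : Fin N → ℝ) :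
    l2 (restr S x) ^ 2 = ∑ i ∈ S, x i ^ 2 := by
  rw [l2_restr, Real.sq_sqrt (by positivity)]

theorem l2_restr_mono {S T : Finset (Fin N)} (h : S ⊆ T) (x : Fin N → ℝ) :
    l2 (restr S x) ≤ l2 (restr T x) := by
  rw [l2_restr, l2_restr]
  exact Real.sqrt_le_sqrt (sum_le_sum_of_subset_of_nonneg h fun i _ _ => sq_nonneg _)

theorem sum_abs_le_sqrt_card_mul_l2_restr (S : Finset (Fin N)) (x : Fin N → ℝ) :
    ∑ i ∈ S, |x i| ≤ √(#S : ℝ) * l2 (restr S x) := by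
  rw [l2_restr, ← Real.sqrt_mul (Nat.cast_nonneg _), Real.le_sqrt (by positivity) (by positivity)]
  simpa only [sq_abs] using sq_sum_le_card_mul_sum_sq (s := S) (f := fun i => |x i|)

theorem l2_restr_le_sqrt_card_mul {S : Finset (Fin N)} {x : Fin N → ℝ} {B : ℝ} (hB : 0 ≤ B)
    (h : ∀ i ∈ S, |x i| ≤ B) : l2 (restr S x) ≤ √(#S : ℝ) * B := by
  rw [l2_restr, ← Real.sqrt_sq hB, ← Real.sqrt_mul (Nat.cast_nonneg _)]
  refine Real.sqrt_le_sqrt ?_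
  rw [← nsmul_eq_mul]
  exact sum_le_card_nsmul _ _ _ fun i hi => by
    simpa only [sq_abs] using pow_le_pow_left₀ (abs_nonneg (x i)) (h i hi) 2

end Vectors

section RestrictedIsometry

variable {M N : ℕ} (A : Matrix (Fin M) (Fin N) ℝ)

theorem l2_mulVec_restr_sdiff_le {K : ℝ} (hK : 0 ≤ K) {s : ℕ} (hs : 0 < s)
    (hA : ∀ v, supp0 v ≤ s → l2 (A *ᵥ v) ≤ K * l2 v) (v : Fin N → ℝ) (S : Finset (Fin N)) :
    ∀ T₁, IsTopSubset v S T₁ → #T₁ = min s #S →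
      l2 (A *ᵥ restr (S \ T₁) v) ≤ K * (∑ i ∈ S, |v i|) / √(s : ℝ) := by
  induction S using Finset.strongInduction with
  | H S ih =>
  intro T₁ hT₁ hcard
  rcases le_or_gt #S s with hS | hS
  · rw [eq_of_subset_of_card_le hT₁.1 (by omega), Finset.sdiff_self, restr_empty,
      Matrix.mulVec_zero, l2_zero]
    positivity
  have hT₁s : #T₁ = s := by omega
  set S' := S \ T₁
  have hS' : S' ⊂ S := sdiff_ssubset hT₁.1 (card_pos.1 (by omega))
  obtain ⟨T₂, hT₂, hcard₂⟩ := exists_isTopSubset v S' (min_le_right s #S')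
  -- Each entry of `T₂` is at most the average modulus on `T₁`.
  have hhead : l2 (A *ᵥ restr T₂ v) ≤ K * (∑ i ∈ T₁, |v i|) / √(s : ℝ) := by
    have hB : ∀ j ∈ T₂, |v j| ≤ (∑ i ∈ T₁, |v i|) / s := fun j hj => by
      rw [le_div_iff₀ (by positivity), mul_comm, ← hT₁s]
      exact hT₁.card_mul_abs_le (hT₂.1 hj)
    calc l2 (A *ᵥ restr T₂ v)
        ≤ K * l2 (restr T₂ v) := hA _ ((supp0_restr_le _ _).trans (by omega))
      _ ≤ K * (√(#T₂ : ℝ) * ((∑ i ∈ T₁, |v i|) / s)) := by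
          gcongr; exact l2_restr_le_sqrt_card_mul (by positivity) hB
      _ ≤ K * (√(s : ℝ) * ((∑ i ∈ T₁, |v i|) / s)) := by
          gcongr; exact_mod_cast hcard₂.trans_le (min_le_left _ _)
      _ = K * (∑ i ∈ T₁, |v i|) / √(s : ℝ) := by
          rw [← Real.sq_sqrt (Nat.cast_nonneg s)]
          field_simp
          simp
  calc l2 (A *ᵥ restr (S \ T₁) v)
      = l2 (A *ᵥ restr T₂ v + A *ᵥ restr (S' \ T₂) v) := by
        rw [← Matrix.mulVec_add, restr_add_restr_sdiff hT₂.1]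
    _ ≤ l2 (A *ᵥ restr T₂ v) + l2 (A *ᵥ restr (S' \ T₂) v) := l2_add_le _ _
    _ ≤ K * (∑ i ∈ T₁, |v i|) / √(s : ℝ) + K * (∑ i ∈ S', |v i|) / √(s : ℝ) :=
        add_le_add hhead (ih S' hS' T₂ hT₂ hcard₂)
    _ = K * (∑ i ∈ S, |v i|) / √(s : ℝ) := by rw [← sum_sdiff hT₁.1]; ring

theorem mul_l2_restr_sq_le_of_mulVec_eq_zero {c₁ c₂ : ℝ} (hc₁ : 0 ≤ c₁) {s : ℕ} (hs : 0 < s)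
    {T : Finset (Fin N)} (hup : ∀ v, supp0 v ≤ s → l2 (A *ᵥ v) ^ 2 ≤ c₁ * l2 v ^ 2)
    (hlow : ∀ v, supp0 v ≤ s + #T → c₂ * l2 v ^ 2 ≤ l2 (A *ᵥ v) ^ 2)
    {f : Fin N → ℝ} (hf : A *ᵥ f = 0) {T₁ : Finset (Fin N)} (hT₁ : IsTopSubset f Tᶜ T₁)
    (hcard : #T₁ = min s #Tᶜ) :
    c₂ * l2 (restr (T ∪ T₁) f) ^ 2 ≤ c₁ * (∑ i ∈ Tᶜ, |f i|) ^ 2 / s := by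
  have hsplit : restr (T ∪ T₁) f + restr (Tᶜ \ T₁) f = f := by
    rw [sdiff_eq_inter_compl, ← compl_union]
    exact restr_add_restr_compl _ _
  have hneg : A *ᵥ restr (T ∪ T₁) f = -(A *ᵥ restr (Tᶜ \ T₁) f) := by
    rw [eq_neg_iff_add_eq_zero, ← Matrix.mulVec_add, hsplit, hf]
  have hK : ∀ v, supp0 v ≤ s → l2 (A *ᵥ v) ≤ √c₁ * l2 v := fun v hv => by
    rw [← Real.sqrt_sq (l2_nonneg v), ← Real.sqrt_mul hc₁,
      Real.le_sqrt (l2_nonneg _) (by positivity)]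
    exact hup v hv
  have htail := l2_mulVec_restr_sdiff_le A (Real.sqrt_nonneg c₁) hs hK f Tᶜ T₁ hT₁ hcard
  have hsupp : supp0 (restr (T ∪ T₁) f) ≤ s + #T :=
    (supp0_restr_le _ _).trans ((card_union_le _ _).trans (by omega))
  calc c₂ * l2 (restr (T ∪ T₁) f) ^ 2
      ≤ l2 (A *ᵥ restr (T ∪ T₁) f) ^ 2 := hlow _ hsupp
    _ = l2 (A *ᵥ restr (Tᶜ \ T₁) f) ^ 2 := by rw [hneg, l2_neg]
    _ ≤ (√c₁ * (∑ i ∈ Tᶜ, |f i|) / √(s : ℝ)) ^ 2 := pow_le_pow_left₀ (l2_nonneg _) htail 2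
    _ = c₁ * (∑ i ∈ Tᶜ, |f i|) ^ 2 / s := by
        rw [div_pow, mul_pow, Real.sq_sqrt hc₁, Real.sq_sqrt (Nat.cast_nonneg _)]

theorem sum_abs_compl_le_mul_l2_restr {f : Fin N → ℝ} {T T₁ R : Finset (Fin N)} {ω : ℝ}
    (hω0 : 0 ≤ ω) (hω1 : ω ≤ 1) (hT₁ : IsTopSubset f Tᶜ T₁) (hR : R ⊆ Tᶜ) (hRT₁ : #R ≤ #T₁)
    (hcone : ∑ i ∈ Tᶜ, |f i| ≤ ω * ∑ i ∈ T, |f i| + (1 - ω) * ∑ i ∈ R, |f i|) :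
    ∑ i ∈ Tᶜ, |f i| ≤ (ω * √(#T : ℝ) + (1 - ω) * √(#R : ℝ)) * l2 (restr (T ∪ T₁) f) := by
  have hl1T : ∑ i ∈ T, |f i| ≤ √(#T : ℝ) * l2 (restr (T ∪ T₁) f) :=
    (sum_abs_le_sqrt_card_mul_l2_restr T f).trans <| by
      gcongr; exact l2_restr_mono subset_union_left f
  have hl2R : l2 (restr R f) ≤ l2 (restr T₁ f) := by
    rw [l2_restr, l2_restr]
    exact Real.sqrt_le_sqrt (hT₁.sum_sq_le hR hRT₁)
  have hl1R : ∑ i ∈ R, |f i| ≤ √(#R : ℝ) * l2 (restr (T ∪ T₁) f) :=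
    (sum_abs_le_sqrt_card_mul_l2_restr R f).trans <| by
      gcongr; exact hl2R.trans (l2_restr_mono subset_union_right f)
  nlinarith [mul_le_mul_of_nonneg_left hl1T hω0, mul_le_mul_of_nonneg_left hl1R (sub_nonneg.2 hω1)]

theorem eq_zero_of_mulVec_eq_zero_of_l1_cone {c₁ c₂ ω : ℝ} (hc₁ : 0 ≤ c₁) (hω0 : 0 ≤ ω)
    (hω1 : ω ≤ 1) {s : ℕ} (hs : 0 < s) {T R : Finset (Fin N)} (hR : R ⊆ Tᶜ) (hRs : #R ≤ s)
    (hup : ∀ v, supp0 v ≤ s → l2 (A *ᵥ v) ^ 2 ≤ c₁ * l2 v ^ 2)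
    (hlow : ∀ v, supp0 v ≤ s + #T → c₂ * l2 v ^ 2 ≤ l2 (A *ᵥ v) ^ 2)
    (hcond : c₁ * (ω * √(#T : ℝ) + (1 - ω) * √(#R : ℝ)) ^ 2 < c₂ * s)
    {f : Fin N → ℝ} (hf : A *ᵥ f = 0)
    (hcone : ∑ i ∈ Tᶜ, |f i| ≤ ω * ∑ i ∈ T, |f i| + (1 - ω) * ∑ i ∈ R, |f i|) : f = 0 := by
  obtain ⟨T₁, hT₁, hcard⟩ := exists_isTopSubset f Tᶜ (min_le_right s #Tᶜ)
  have hL : ∑ i ∈ Tᶜ, |f i| ≤ (ω * √(#T : ℝ) + (1 - ω) * √(#R : ℝ)) * l2 (restr (T ∪ T₁) f) :=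
    sum_abs_compl_le_mul_l2_restr hω0 hω1 hT₁ hR (hcard ▸ le_min hRs (card_le_card hR)) hcone
  have hb := mul_l2_restr_sq_le_of_mulVec_eq_zero A hc₁ hs hup hlow hf hT₁ hcard
  have hL0 : 0 ≤ ∑ i ∈ Tᶜ, |f i| := sum_nonneg fun i _ => abs_nonneg _
  have hb0 : l2 (restr (T ∪ T₁) f) = 0 := by
    by_contra hne
    have hbpos := lt_of_le_of_ne (l2_nonneg _) (Ne.symm hne)
    have hs' : (0 : ℝ) < s := by exact_mod_cast hs
    rw [le_div_iff₀ hs'] at hb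
    have := mul_le_mul_of_nonneg_left (pow_le_pow_left₀ hL0 hL 2) hc₁
    nlinarith [mul_lt_mul_of_pos_right hcond (pow_pos hbpos 2)]
  have hTc : ∑ i ∈ Tᶜ, |f i| = 0 := le_antisymm (by simpa [hb0] using hL) hL0
  have hT : ∑ i ∈ T ∪ T₁, f i ^ 2 = 0 := by rw [← l2_sq_restr, hb0, sq, zero_mul]
  ext i
  by_cases hi : i ∈ T
  · exact pow_eq_zero_iff two_ne_zero |>.1 <|
      (sum_eq_zero_iff_of_nonneg fun j _ => sq_nonneg (f j)).1 hT i (mem_union_left _ hi)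
  · exact abs_eq_zero.1 <|
      (sum_eq_zero_iff_of_nonneg fun j _ => abs_nonneg (f j)).1 hTc i (mem_compl.2 hi)

end RestrictedIsometry

theorem sum_abs_compl_le_of_weighted_sum_le {ι : Type*} [Fintype ι] [DecidableEq ι]
    {T That : Finset ι} (hT : T ⊆ That) {ω : ℝ} (hω0 : 0 ≤ ω) {w e f : ι → ℝ}
    (hw : ∀ j, w j = if j ∈ That then ω else 1) (he : ∀ i, e i ≠ 0 → i ∈ T)
    (hopt : ∑ j, w j * |e j - f j| ≤ ∑ j, w j * |e j|) :
    ∑ i ∈ Tᶜ, |f i| ≤ ω * ∑ i ∈ T, |f i| + (1 - ω) * ∑ i ∈ That \ T, |f i| := by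
  have he' : ∀ j ∉ T, e j = 0 := fun j hj => by_contra fun h => hj (he j h)
  set F : ι → ℝ := fun j => w j * |e j - f j| - w j * |e j|
  have hF : ∑ j, F j ≤ 0 := by simp only [F, sum_sub_distrib]; linarith
  have hFT : -(ω * ∑ i ∈ T, |f i|) ≤ ∑ j ∈ T, F j := by
    rw [mul_sum, ← sum_neg_distrib]
    refine sum_le_sum fun j hj => ?_
    have := abs_sub_abs_le_abs_sub (e j) (e j - f j)
    rw [sub_sub_cancel] at this
    simp only [F, hw, if_pos (hT hj)]
    nlinarith [mul_le_mul_of_nonneg_left this hω0]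
  have hFmid : ∑ j ∈ That \ T, F j = ω * ∑ i ∈ That \ T, |f i| := by
    rw [mul_sum]
    refine sum_congr rfl fun j hj => ?_
    simp [F, hw, (mem_sdiff.1 hj).1, he' j (mem_sdiff.1 hj).2]
  have hFout : ∑ j ∈ Thatᶜ, F j = ∑ i ∈ Thatᶜ, |f i| := by
    refine sum_congr rfl fun j hj => ?_
    have hj' : j ∉ That := mem_compl.1 hj
    simp [F, hw, hj', he' j fun h => hj' (hT h)]
  have h1 := sum_compl_add_sum That F
  have h2 := sum_sdiff hT (f := F)
  have h3 := sum_compl_add_sum That fun i => |f i|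
  have h4 := sum_sdiff hT (f := fun i => |f i|)
  have h5 := sum_compl_add_sum T fun i => |f i|
  linarith

theorem l1_restr_compl_eq_zero {N : ℕ} {e : Fin N → ℝ} {T S : Finset (Fin N)}
    (he : ∀ i, e i ≠ 0 → i ∈ T) (hTS : T ⊆ S) : l1 (restr Sᶜ e) = 0 := by
  rw [l1_restr]
  exact sum_eq_zero fun i hi => abs_eq_zero.2 <| by_contra fun h => mem_compl.1 hi (hTS (he i h))

theorem ne_zero_and_mul_sq_lt_of_add_mul_lt_sub {a ω ρ δ₁ δ₂ C t : ℝ} (ht : 0 < t)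
    (hδ₁ : 0 ≤ δ₁) (hC : C = a / (ω + (1 - ω) * √(ρ - 1)) ^ 2) (hcond : δ₁ + C * δ₂ < C - 1) :
    a ≠ 0 ∧ (1 + δ₁) * (ω * √t + (1 - ω) * √((ρ - 1) * t)) ^ 2 < (1 - δ₂) * (a * t) := by
  set d := ω + (1 - ω) * √(ρ - 1)
  -- `C ≠ 0` rules out both `a = 0` and the junk value `a / 0 = 0` at `d = 0`.
  have hC0 : C ≠ 0 := by rintro rfl; linarith
  obtain ⟨ha0, hd0⟩ := div_ne_zero_iff.1 (hC ▸ hC0)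
  have hCd : C * d ^ 2 = a := by rw [hC]; exact div_mul_cancel₀ _ hd0
  have hD : ω * √t + (1 - ω) * √((ρ - 1) * t) = d * √t := by rw [Real.sqrt_mul' _ ht.le]; ring
  refine ⟨ha0, ?_⟩
  rw [hD, mul_pow, Real.sq_sqrt ht.le]
  calc (1 + δ₁) * (d ^ 2 * t)
      < C * (1 - δ₂) * d ^ 2 * t := by
        rw [← mul_assoc]
        exact mul_lt_mul_of_pos_right (mul_lt_mul_of_pos_right (by linarith)
          (lt_of_le_of_ne (sq_nonneg d) hd0.symm)) ht
    _ = (1 - δ₂) * (a * t) := by rw [← hCd]; ring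

theorem stmt14_general (m n k a : ℕ) (N : ℕ) (hkm : 0 < k * m)
    (H : Matrix (Fin N) (Fin n) ℝ)
    (σmin : ℝ) (hσ : 0 < σmin)
    (hσmin : ∀ x : Fin n → ℝ, σmin * l2 x ≤ l2 (H.mulVec x))
    (U2 : Matrix (Fin N) (Fin (N - n)) ℝ)
    (hU2H : U2.transpose * H = 0)
    (δ1 δ2 : ℝ) (hδ1 : 0 ≤ δ1)
    (hRIP1 : ∀ v : Fin N → ℝ, supp0 v ≤ a * (k * m) →
      (1 - δ1) * (l2 v) ^ 2 ≤ (l2 (U2.transpose.mulVec v)) ^ 2 ∧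
        (l2 (U2.transpose.mulVec v)) ^ 2 ≤ (1 + δ1) * (l2 v) ^ 2)
    (hRIP2 : ∀ v : Fin N → ℝ, supp0 v ≤ (a + 1) * (k * m) →
      (1 - δ2) * (l2 v) ^ 2 ≤ (l2 (U2.transpose.mulVec v)) ^ 2 ∧
        (l2 (U2.transpose.mulVec v)) ^ 2 ≤ (1 + δ2) * (l2 v) ^ 2)
    (T That : Finset (Fin N)) (hT : T.card = k * m) (hTThat : T ⊆ That)
    (ρ : ℝ) (hρ : ρ = (That.card : ℝ) / (k * m))
    (xstar : Fin n → ℝ) (e : Fin N → ℝ)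
    (hesupp : ∀ i, e i ≠ 0 → i ∈ T)
    (y : Fin N → ℝ) (hy : y = H.mulVec xstar + e)
    (ω : ℝ) (hω0 : 0 ≤ ω) (hω1 : ω ≤ 1)
    (w : Fin N → ℝ) (hw : ∀ j, w j = if j ∈ That then ω else 1)
    (xhat : Fin n → ℝ)
    (hopt : ∀ z : Fin n → ℝ,
      ∑ j, w j * |y j - H.mulVec xhat j| ≤ ∑ j, w j * |y j - H.mulVec z j|)
    (ha2 : ρ - 1 ≤ (a : ℝ))
    (C C1 : ℝ)
    (hC : C = (a : ℝ) / (ω + (1 - ω) * Real.sqrt (ρ - 1)) ^ 2)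
    (hcond : δ1 + C * δ2 < C - 1) :
    l2 (fun i => xhat i - xstar i) ≤
      C1 / (σmin * Real.sqrt ((k : ℝ) * m)) *
        (ω * l1 (restr Tᶜ e) + (1 - ω) * l1 (restr Thatᶜ e)) := by
  set f := H *ᵥ (xhat - xstar)
  have hf : U2ᵀ *ᵥ f = 0 := by rw [Matrix.mulVec_mulVec, hU2H, Matrix.zero_mulVec]
  have hcone := sum_abs_compl_le_of_weighted_sum_le hTThat hω0 hw hesupp (f := f) <| by
    simpa [hy, f, Matrix.mulVec_sub, sub_sub_eq_add_sub, add_comm] using hopt xstar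
  have hkmR : (0 : ℝ) < k * m := by exact_mod_cast hkm
  obtain ⟨ha0, hkey⟩ := ne_zero_and_mul_sq_lt_of_add_mul_lt_sub hkmR hδ1 hC hcond
  have hR : (#(That \ T) : ℝ) = (ρ - 1) * (k * m) := by
    rw [card_sdiff_of_subset hTThat, Nat.cast_sub (card_le_card hTThat), hT, hρ]
    push_cast
    rw [sub_mul, one_mul, div_mul_cancel₀ _ hkmR.ne']
  have hRs : #(That \ T) ≤ a * (k * m) := by
    have : (#(That \ T) : ℝ) ≤ a * (k * m) := by rw [hR]; gcongr
    exact_mod_cast this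
  have hs : 0 < a * (k * m) := Nat.mul_pos (Nat.pos_of_ne_zero (by exact_mod_cast ha0)) hkm
  have hf0 : f = 0 := eq_zero_of_mulVec_eq_zero_of_l1_cone U2ᵀ (by linarith) hω0 hω1 hs
    (fun i hi => mem_compl.2 (mem_sdiff.1 hi).2) hRs (fun v hv => (hRIP1 v hv).2)
    (fun v hv => (hRIP2 v (by rw [hT] at hv; rwa [add_one_mul])).1)
    (by rw [hR, hT]; push_cast; exact hkey) hf hcone
  have hx : σmin * l2 (xhat - xstar) ≤ σmin * 0 := by
    simpa [f, hf0, l2_zero] using hσmin (xhat - xstar)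
  rw [l1_restr_compl_eq_zero hesupp Subset.rfl, l1_restr_compl_eq_zero hesupp hTThat]
  exact (le_of_mul_le_mul_left hx hσ).trans_eq (by ring)

/-- Weighted ℓ₁ recovery error bound for the resilient observer with pruned support
prior (Theorem 2 of the paper). Measurements `y = Hx* + e`, attack `e` supported on
`T` with `|T| = km`, pruned prior `T̂η ⊇ T` with `|T̂η| = ρ·km`; `x̂` minimizes the
weighted ℓ₁ residual with weight `ω` on `T̂η` and `1` on `T̂ηᶜ`. Under the RIP on
`U₂ᵀ` of orders `a·km` and `(a+1)·km` and the condition `δ₁ + Cδ₂ < C − 1`,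
`‖x̂ − x*‖₂ ≤ (C₁/(σ̲√(km)))(ω σ_{km}(e) + (1−ω)‖e_{T̂ηᶜ}‖₁)`. -/
theorem stmt14 (Tw m n k a : ℕ) (N : ℕ) (hN : N = Tw * m) (hkm : 0 < k * m)
    (H : Matrix (Fin N) (Fin n) ℝ)
    (σmin : ℝ) (hσ : 0 < σmin)
    (hσmin : ∀ x : Fin n → ℝ, σmin * l2 x ≤ l2 (H.mulVec x))
    (U2 : Matrix (Fin N) (Fin (N - n)) ℝ)
    (hU2H : U2.transpose * H = 0)
    (δ1 δ2 : ℝ) (hδ1 : 0 ≤ δ1) (hδ2 : 0 ≤ δ2)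
    (hRIP1 : ∀ v : Fin N → ℝ, supp0 v ≤ a * (k * m) →
      (1 - δ1) * (l2 v) ^ 2 ≤ (l2 (U2.transpose.mulVec v)) ^ 2 ∧
        (l2 (U2.transpose.mulVec v)) ^ 2 ≤ (1 + δ1) * (l2 v) ^ 2)
    (hRIP2 : ∀ v : Fin N → ℝ, supp0 v ≤ (a + 1) * (k * m) →
      (1 - δ2) * (l2 v) ^ 2 ≤ (l2 (U2.transpose.mulVec v)) ^ 2 ∧
        (l2 (U2.transpose.mulVec v)) ^ 2 ≤ (1 + δ2) * (l2 v) ^ 2)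
    (T That : Finset (Fin N)) (hT : T.card = k * m) (hTThat : T ⊆ That)
    (ρ : ℝ) (hρ : ρ = (That.card : ℝ) / (k * m))
    (xstar : Fin n → ℝ) (e : Fin N → ℝ)
    (hesupp : ∀ i, e i ≠ 0 → i ∈ T)
    (y : Fin N → ℝ) (hy : y = H.mulVec xstar + e)
    (ω : ℝ) (hω0 : 0 ≤ ω) (hω1 : ω ≤ 1)
    (w : Fin N → ℝ) (hw : ∀ j, w j = if j ∈ That then ω else 1)
    (xhat : Fin n → ℝ)
    (hopt : ∀ z : Fin n → ℝ,
      ∑ j, w j * |y j - H.mulVec xhat j| ≤ ∑ j, w j * |y j - H.mulVec z j|)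
    (ha1 : 1 ≤ a) (ha2 : ρ - 1 ≤ (a : ℝ))
    (C C1 : ℝ)
    (hC : C = (a : ℝ) / (ω + (1 - ω) * Real.sqrt (ρ - 1)) ^ 2)
    (hcond : δ1 + C * δ2 < C - 1)
    (hC1 : C1 = 2 * (Real.sqrt a)⁻¹ * (Real.sqrt (1 - δ2) + Real.sqrt (1 + δ1)) /
      (Real.sqrt (1 - δ2) - (1 / C) * Real.sqrt (1 + δ1))) :
    l2 (fun i => xhat i - xstar i) ≤
      C1 / (σmin * Real.sqrt ((k : ℝ) * m)) *
        (ω * l1 (restr Tᶜ e) + (1 - ω) * l1 (restr Thatᶜ e)) :=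
  stmt14_general m n k a N hkm H σmin hσ hσmin U2 hU2H δ1 δ2 hδ1 hRIP1 hRIP2 T That hT hTThat ρ hρ
    xstar e hesupp y hy ω hω0 hω1 w hw xhat hopt ha2 C C1 hC hcond
end

section
/- (FDIA residual stealthiness.) In the setting of Theorem 1: with H = U₁Σ₁Vᵀ (thin SVD), attack support sequence T, z_e ∈ ℝ^n feasible for ‖U_{1,T^c} z_e‖₂ ≤ ε/√(N−|T|), attack e with e_T = U_{1,T} z_e, e_{T^c} = 0, measurements y = Hx* + e, and decoded state x̂ = VΣ₁⁻¹(z* − z_e^⊥) where z* = Σ₁Vᵀx* and z_e^⊥ = argmin_z ‖U₁z + P[U_{1,T}; 0] z_e‖₁, the residual satisfies ‖y − Hx̂‖₁ ≤ √(N−|T|)·‖U_{1,T^c} z_e‖₂ ≤ ε, i.e., the detector with threshold ε does not fire. -/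
open Finset Matrix

lemma Finset.natCast_card_compl {α R : Type*} [Fintype α] [DecidableEq α] [AddGroupWithOne R]
    (s : Finset α) : ((#sᶜ : ℕ) : R) = Fintype.card α - #s := by
  rw [card_compl, Nat.cast_sub (card_le_univ s)]

lemma Matrix.mul_mulVec_eq_sub_of_mulVec_eq {m n o R : Type*} [Fintype n] [Fintype o]
    [CommRing R] (U : Matrix m n R) (M : Matrix n o R) {x x' : o → R} {z : n → R}
    (h : M *ᵥ x = M *ᵥ x' - z) : (U * M) *ᵥ x = (U * M) *ᵥ x' - U *ᵥ z := by
  rw [← mulVec_mulVec, ← mulVec_mulVec, h, mulVec_sub]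

lemma l1_neg {N : ℕ} (x : Fin N → ℝ) : l1 (-x) = l1 x := by
  simp only [l1, Pi.neg_apply, abs_neg]

lemma neg_add_restr {N : ℕ} (S : Finset (Fin N)) (x : Fin N → ℝ) :
    -x + restr S x = -restr Sᶜ x := by
  funext i
  by_cases hi : i ∈ S <;> simp [restr, hi]

lemma l1_restr_le_sqrt_card_mul_l2 {N : ℕ} (S : Finset (Fin N)) (x : Fin N → ℝ) :
    l1 (restr S x) ≤ √(#S) * l2 (restr S x) := by
  have hl1 : l1 (restr S x) = ∑ i ∈ S, |x i| := by
    simp [l1, restr, apply_ite abs, sum_ite_mem]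
  have hl2 : l2 (restr S x) = √(∑ i ∈ S, |x i| ^ 2) := by
    simp [l2, restr, sum_ite_mem]
  rw [hl1, hl2, ← Real.sqrt_mul (Nat.cast_nonneg _)]
  exact Real.le_sqrt_of_sq_le sq_sum_le_card_mul_sum_sq

theorem stmt17_general (N n : ℕ) (U1 : Matrix (Fin N) (Fin n) ℝ)
    (M : Matrix (Fin n) (Fin n) ℝ)
    (H : Matrix (Fin N) (Fin n) ℝ) (hH : H = U1 * M)
    (T : Finset (Fin N))
    (ε : ℝ) (hε : 0 < ε) (ze : Fin n → ℝ)
    (hfeas : l2 (restr Tᶜ (U1.mulVec ze)) ≤ ε / Real.sqrt ((N : ℝ) - T.card))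
    (e : Fin N → ℝ) (he : e = restr T (U1.mulVec ze))
    (xstar : Fin n → ℝ) (y : Fin N → ℝ) (hy : y = H.mulVec xstar + e)
    (zperp : Fin n → ℝ)
    (hmin : ∀ z : Fin n → ℝ, l1 (U1.mulVec zperp + e) ≤ l1 (U1.mulVec z + e))
    (xhat : Fin n → ℝ) (hxhat : M.mulVec xhat = M.mulVec xstar - zperp) :
    l1 (fun i => y i - H.mulVec xhat i) ≤
        Real.sqrt ((N : ℝ) - T.card) * l2 (restr Tᶜ (U1.mulVec ze)) ∧
      Real.sqrt ((N : ℝ) - T.card) * l2 (restr Tᶜ (U1.mulVec ze)) ≤ ε := by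
  have hres : (fun i => y i - H.mulVec xhat i) = U1 *ᵥ zperp + e := by
    change y - H *ᵥ xhat = _
    rw [hy, hH, mul_mulVec_eq_sub_of_mulVec_eq U1 M hxhat]
    abel
  refine ⟨?_, ?_⟩
  · rw [hres, show (N : ℝ) - #T = #Tᶜ by rw [natCast_card_compl, Fintype.card_fin]]
    calc l1 (U1 *ᵥ zperp + e) ≤ l1 (U1 *ᵥ (-ze) + e) := hmin (-ze)
      _ = l1 (restr Tᶜ (U1 *ᵥ ze)) := by rw [he, mulVec_neg, neg_add_restr, l1_neg]
      _ ≤ √(#Tᶜ) * l2 (restr Tᶜ (U1 *ᵥ ze)) := l1_restr_le_sqrt_card_mul_l2 _ _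
  · rw [mul_comm]
    exact mul_le_of_le_div₀ hε.le (Real.sqrt_nonneg _) hfeas

/-- FDIA residual stealthiness. With thin SVD `H = U₁ M` (`M = Σ₁Vᵀ` invertible),
attack `e = restr T (U₁ z_e)` where `z_e` is feasible (`‖U_{1,Tᶜ} z_e‖₂ ≤ ε/√(N−|T|)`),
measurements `y = Hx* + e`, and decoded state `x̂` with `M x̂ = M x* − z⊥` where `z⊥`
minimizes `z ↦ ‖U₁ z + e‖₁`, the residual satisfies
`‖y − Hx̂‖₁ ≤ √(N−|T|)·‖U_{1,Tᶜ} z_e‖₂ ≤ ε`: the detector with threshold `ε` does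
not fire. -/
theorem stmt17 (N n : ℕ) (U1 : Matrix (Fin N) (Fin n) ℝ)
    (M : Matrix (Fin n) (Fin n) ℝ) (hM : IsUnit M.det)
    (H : Matrix (Fin N) (Fin n) ℝ) (hH : H = U1 * M)
    (T : Finset (Fin N)) (hTN : T.card < N)
    (ε : ℝ) (hε : 0 < ε) (ze : Fin n → ℝ)
    (hfeas : l2 (restr Tᶜ (U1.mulVec ze)) ≤ ε / Real.sqrt ((N : ℝ) - T.card))
    (e : Fin N → ℝ) (he : e = restr T (U1.mulVec ze))
    (xstar : Fin n → ℝ) (y : Fin N → ℝ) (hy : y = H.mulVec xstar + e)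
    (zperp : Fin n → ℝ)
    (hmin : ∀ z : Fin n → ℝ, l1 (U1.mulVec zperp + e) ≤ l1 (U1.mulVec z + e))
    (xhat : Fin n → ℝ) (hxhat : M.mulVec xhat = M.mulVec xstar - zperp) :
    l1 (fun i => y i - H.mulVec xhat i) ≤
        Real.sqrt ((N : ℝ) - T.card) * l2 (restr Tᶜ (U1.mulVec ze)) ∧
      Real.sqrt ((N : ℝ) - T.card) * l2 (restr Tᶜ (U1.mulVec ze)) ≤ ε :=
  stmt17_general N n U1 M H hH T ε hε ze hfeas e he xstar y hy zperp hmin xhat hxhat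
end
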